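/- arXiv:0810.4789 — 3 statements merged into one kernel-verified Lean document; each statement's English description precedes it below -/
import Mathlib

section
/- If Q₁ and Q₂ are two quivers (orientations) with the same underlying graph T, and T is a tree, then Q₁ and Q₂ are mutation equivalent. -/
namespace QuiverMutation

variable {V W : Type} [Fintype V] [DecidableEq V] [Fintype W] [DecidableEq W]

/-- A quiver without loops or 2-cycles is encoded by a skew-symmetric integer
matrix `B`, where `B i j > 0` means there are `B i j` arrows from `i` to `j`. -/
def Skew (B : V → V → ℤ) : Prop := ∀ i j, B i j = - B j i

/-- Fomin–Zelevinsky quiver/matrix mutation at the vertex `k`. -/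
def mutate (B : V → V → ℤ) (k : V) : V → V → ℤ := fun i j =>
  if i = k ∨ j = k then - B i j
  else B i j + max (B i k) 0 * max (B k j) 0 - max (- B i k) 0 * max (- B k j) 0

/-- Iterated mutation along a list of vertices (first element mutated first). -/
def mutateList (B : V → V → ℤ) (l : List V) : V → V → ℤ := l.foldl mutate B

/-- Relabelling the vertices of a quiver along a bijection. -/
def relabel (σ : V ≃ W) (B : V → V → ℤ) : W → W → ℤ := fun i j => B (σ.symm i) (σ.symm j)

/-- Two quivers are mutation equivalent if one is obtained from the other by a
finite sequence of mutations, up to isomorphism (relabelling). -/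
def MutEquiv (B : V → V → ℤ) (C : W → W → ℤ) : Prop :=
  ∃ (l : List V) (σ : V ≃ W), relabel σ (mutateList B l) = C

/-- The underlying graph of a quiver. -/
def graph (B : V → V → ℤ) : SimpleGraph V where
  Adj i j := i ≠ j ∧ (B i j ≠ 0 ∨ B j i ≠ 0)
  symm := ⟨fun i j h => ⟨h.1.symm, h.2.symm⟩⟩
  loopless := ⟨fun i h => h.1 rfl⟩

instance (B : V → V → ℤ) : DecidableRel (graph B).Adj :=
  fun i j => decidable_of_iff (i ≠ j ∧ (B i j ≠ 0 ∨ B j i ≠ 0)) Iff.rfl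

/-- The set of neighbours of a vertex. -/
def nbrs (B : V → V → ℤ) (v : V) : Finset V := Finset.univ.filter fun w => (graph B).Adj v w

/-- The valency of a vertex: the number of neighbouring vertices. -/
def valency (B : V → V → ℤ) (v : V) : ℕ := (nbrs B v).card

/-- An oriented 3-cycle `x → y → z → x`. -/
def Cycle3 (B : V → V → ℤ) (x y z : V) : Prop := 0 < B x y ∧ 0 < B y z ∧ 0 < B z x

/-- There is an oriented 3-cycle through the three vertices `x, y, z`. -/
def Tri (B : V → V → ℤ) (x y z : V) : Prop := Cycle3 B x y z ∨ Cycle3 B x z y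

/-- The edge between `x` and `y` belongs to some oriented 3-cycle. -/
def EdgeIn3 (B : V → V → ℤ) (x y : V) : Prop := ∃ z, Tri B x y z

/-- A walk in the underlying graph is oriented (traverses each arrow forwards). -/
def OrientedW (B : V → V → ℤ) {u v : V} (w : (graph B).Walk u v) : Prop :=
  ∀ d ∈ w.darts, 0 < B d.toProd.1 d.toProd.2

/-- The combinatorial description of the class `M^A`: a connected quiver all of
whose arrows are single, all of whose non-trivial cycles are oriented of
length 3, every vertex has valency at most 4, a valency-4 vertex has its four
arrows split between two 3-cycles, and a valency-3 vertex has two of its arrows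
in a 3-cycle and the third in no 3-cycle. -/
def MAQuiver (B : V → V → ℤ) : Prop :=
  (graph B).Connected ∧
  (∀ i j, B i j ≤ 1) ∧
  (∀ (u : V) (w : (graph B).Walk u u), w.IsCircuit →
      w.length = 3 ∧ (OrientedW B w ∨ OrientedW B w.reverse)) ∧
  (∀ v, valency B v ≤ 4) ∧
  (∀ v, valency B v = 4 →
      ∃ w x y z, nbrs B v = {w, x, y, z} ∧ Tri B v w x ∧ Tri B v y z) ∧
  (∀ v, valency B v = 3 →
      ∃ w x y, nbrs B v = {w, x, y} ∧ Tri B v w x ∧ ¬ EdgeIn3 B v y)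

/-- A connecting vertex: valency at most 2 and, if of valency 2, lying on a 3-cycle. -/
def Connecting (B : V → V → ℤ) (c : V) : Prop :=
  valency B c ≤ 2 ∧ (valency B c = 2 → ∃ x y, Tri B c x y)

/-- The full subquiver on a set `s` of vertices. -/
def res (B : V → V → ℤ) (s : Finset V) : {v // v ∈ s} → {v // v ∈ s} → ℤ :=
  fun i j => B i j

/-- Remove the arrow(s) between two given vertices. -/
def dropEdge (B : V → V → ℤ) (x y : V) : V → V → ℤ := fun i j =>
  if (i = x ∧ j = y) ∨ (i = y ∧ j = x) then 0 else B i j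

/-- The linearly oriented type `A_k` quiver `1 → 2 → ⋯ → k` (on `Fin k`). -/
def lineA (k : ℕ) : Fin k → Fin k → ℤ := fun i j =>
  (if (j : ℕ) = (i : ℕ) + 1 then 1 else 0) - (if (i : ℕ) = (j : ℕ) + 1 then 1 else 0)

/-- Cyclic successor on `Fin k`. -/
def fsucc {k : ℕ} (i : Fin k) : Fin k := ⟨(i.1 + 1) % k, Nat.mod_lt _ i.pos⟩

/-- Cyclic predecessor on `Fin k`. -/
def fpred {k : ℕ} (i : Fin k) : Fin k := ⟨(i.1 + (k - 1)) % k, Nat.mod_lt _ i.pos⟩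

/-- The oriented `n`-cycle (on `Fin n`, with arrows `i → i+1` mod `n`). -/
def cyc (n : ℕ) : Fin n → Fin n → ℤ := fun i j =>
  (if j = fsucc i then 1 else 0) - (if i = fsucc j then 1 else 0)

/-- The type `D_n` Dynkin quiver (0-indexed on `Fin n`): arrows `i → i+1` for
`i+1 ≤ n-3`, and arrows `(n-3) → (n-2)`, `(n-3) → (n-1)`. -/
def Dmat (n : ℕ) : Fin n → Fin n → ℤ := fun i j =>
  (if ((j : ℕ) = (i : ℕ) + 1 ∧ (j : ℕ) ≤ n - 3) ∨
      ((i : ℕ) = n - 3 ∧ ((j : ℕ) = n - 2 ∨ (j : ℕ) = n - 1)) then 1 else 0) -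
  (if ((i : ℕ) = (j : ℕ) + 1 ∧ (i : ℕ) ≤ n - 3) ∨
      ((j : ℕ) = n - 3 ∧ ((i : ℕ) = n - 2 ∨ (i : ℕ) = n - 1)) then 1 else 0)

/-- Type I: two valency-one vertices `a`, `b`, each joined by a single arrow to
a common vertex `c`, with `Q \ {a,b} ∈ M^A` and `c` a connecting vertex of it. -/
structure TypeIData (B : V → V → ℤ) where
  a : V
  b : V
  c : V
  hab : a ≠ b
  va : valency B a = 1
  vb : valency B b = 1
  haarrow : B a c = 1 ∨ B a c = -1
  hbarrow : B b c = 1 ∨ B b c = -1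
  hc : c ∈ ({a, b} : Finset V)ᶜ
  hQ' : MAQuiver (res B ({a, b} : Finset V)ᶜ)
  hconn : Connecting (res B ({a, b} : Finset V)ᶜ) ⟨c, hc⟩

/-- Type II: a full subquiver on `{a,b,c,d}` with arrows `c→a, a→d, c→b, b→d, d→c`,
where `a`, `b` have valency 2 in `Q`, and removing `a`, `b` and the arrow `d→c`
leaves two disjoint quivers in `M^A` with `c`, `d` connecting vertices. -/
structure TypeIIData (B : V → V → ℤ) where
  a : V
  b : V
  c : V
  d : V
  hcard : ({a, b, c, d} : Finset V).card = 4
  hca : B c a = 1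
  had : B a d = 1
  hcb : B c b = 1
  hbd : B b d = 1
  hdc : B d c = 1
  hab : B a b = 0
  hba : B b a = 0
  va : valency B a = 2
  vb : valency B b = 2
  s : Finset V
  t : Finset V
  hst : Disjoint s t
  hpart : s ∪ t = ({a, b} : Finset V)ᶜ
  hcs : c ∈ s
  hdt : d ∈ t
  hsep : ∀ i ∈ s, ∀ j ∈ t, dropEdge B d c i j = 0 ∧ dropEdge B d c j i = 0
  hQ' : MAQuiver (res (dropEdge B d c) s)
  hQ'' : MAQuiver (res (dropEdge B d c) t)
  hcconn : Connecting (res (dropEdge B d c) s) ⟨c, hcs⟩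
  hdconn : Connecting (res (dropEdge B d c) t) ⟨d, hdt⟩

/-- Type III: a full subquiver which is a directed 4-cycle `c→a→d→b→c`, such that
`Q \ {a,b}` is a disjoint union of two quivers in `M^A` with `c`, `d` connecting. -/
structure TypeIIIData (B : V → V → ℤ) where
  a : V
  b : V
  c : V
  d : V
  hcard : ({a, b, c, d} : Finset V).card = 4
  hca : B c a = 1
  had : B a d = 1
  hdb : B d b = 1
  hbc : B b c = 1
  hab : B a b = 0
  hba : B b a = 0
  hcd : B c d = 0
  hdc : B d c = 0
  s : Finset V
  t : Finset V
  hst : Disjoint s t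
  hpart : s ∪ t = ({a, b} : Finset V)ᶜ
  hcs : c ∈ s
  hdt : d ∈ t
  hsep : ∀ i ∈ s, ∀ j ∈ t, B i j = 0 ∧ B j i = 0
  hQ' : MAQuiver (res B s)
  hQ'' : MAQuiver (res B t)
  hcconn : Connecting (res B s) ⟨c, hcs⟩
  hdconn : Connecting (res B t) ⟨d, hdt⟩

/-- Type IV: a full central directed `k`-cycle `f 0 → f 1 → ⋯ → f (k-1) → f 0`
(`k ≥ 3`), spikes (full oriented 3-cycles `f i → f (i+1) → c i → f i`) over the
central arrows indexed by `S`, no other arrows at central vertices, and the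
complement of the central cycle a disjoint union of quivers in `M^A`, one for
each spike, with each spike vertex `c i` a connecting vertex. -/
structure TypeIVData (B : V → V → ℤ) (k : ℕ) where
  hk : 3 ≤ k
  f : Fin k → V
  hf : Function.Injective f
  hcyc : ∀ i : Fin k, B (f i) (f (fsucc i)) = 1
  hfull : ∀ i j : Fin k, j ≠ fsucc i → i ≠ fsucc j → B (f i) (f j) = 0
  S : Finset (Fin k)
  c : Fin k → V
  hcinj : ∀ i ∈ S, ∀ j ∈ S, c i = c j → i = j
  hcoff : ∀ i ∈ S, ∀ j : Fin k, c i ≠ f j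
  hspike1 : ∀ i ∈ S, B (f (fsucc i)) (c i) = 1
  hspike2 : ∀ i ∈ S, B (c i) (f i) = 1
  hnomore : ∀ (i : Fin k) (v : V), (graph B).Adj (f i) v →
      (∃ j, v = f j) ∨ (i ∈ S ∧ v = c i) ∨ (fpred i ∈ S ∧ v = c (fpred i))
  P : Fin k → Finset V
  hP : ∀ i (h : i ∈ S), c i ∈ P i
  hPdisj : ∀ i ∈ S, ∀ j ∈ S, i ≠ j → Disjoint (P i) (P j)
  hPunion : S.biUnion P = Finset.univ \ Finset.univ.image f
  hPsep : ∀ i ∈ S, ∀ j ∈ S, i ≠ j → ∀ x ∈ P i, ∀ y ∈ P j, B x y = 0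
  hPA : ∀ i ∈ S, MAQuiver (res B (P i))
  hPconn : ∀ i (h : i ∈ S), Connecting (res B (P i)) ⟨c i, hP i h⟩

def IsTypeI (B : V → V → ℤ) : Prop := Nonempty (TypeIData B)
def IsTypeII (B : V → V → ℤ) : Prop := Nonempty (TypeIIData B)
def IsTypeIII (B : V → V → ℤ) : Prop := Nonempty (TypeIIIData B)
def IsTypeIV (B : V → V → ℤ) (k : ℕ) : Prop := Nonempty (TypeIVData B k)

/-- The class `M^D_n`: quivers of Type I, II, III or IV. -/
def InMD (B : V → V → ℤ) : Prop :=
  IsTypeI B ∨ IsTypeII B ∨ IsTypeIII B ∨ ∃ k, IsTypeIV B k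



/-! ### Auxiliary machinery -/

section Aux

variable {U : Type} [Fintype U] [DecidableEq U]

/-- A vertex at which mutation is just a sign flip (a source or a sink). -/
def IsFlip (B : U → U → ℤ) (k : U) : Prop := (∀ j, 0 ≤ B k j) ∨ (∀ j, B k j ≤ 0)

/-- Sign flip at a vertex. -/
def flipAt (B : U → U → ℤ) (k : U) : U → U → ℤ := fun i j =>
  if i = k ∨ j = k then - B i j else B i j

/-- Every mutation in the list is at a source or sink at the time of mutation. -/
def FlipList : (U → U → ℤ) → List U → Prop
  | _, [] => True
  | B, k :: l => IsFlip B k ∧ FlipList (mutate B k) l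

lemma Skew.diag {B : U → U → ℤ} (hB : Skew B) (i : U) : B i i = 0 := by
  have := hB i i; omega

lemma mutate_eq_flipAt {B : U → U → ℤ} {k : U} (hB : Skew B) (h : IsFlip B k) :
    mutate B k = flipAt B k := by
  funext i j
  unfold mutate flipAt
  by_cases hij : i = k ∨ j = k
  · simp [hij]
  · simp only [hij, if_false]
    have hik := hB i k
    rcases h with h | h
    · have h1 : B i k ≤ 0 := by have := h i; omega
      have h2 : 0 ≤ B k j := h j
      rw [max_eq_right h1, max_eq_right (by omega : -B k j ≤ 0)]
      ring
    · have h2 : B k j ≤ 0 := h j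
      have hki := h i
      rw [max_eq_right h2, max_eq_right (by omega : -B i k ≤ 0)]
      ring

lemma flipAt_skew {B : U → U → ℤ} (hB : Skew B) (k : U) : Skew (flipAt B k) := by
  intro i j
  unfold flipAt
  by_cases hij : i = k ∨ j = k
  · have : j = k ∨ i = k := hij.symm
    simp [hij, this, hB i j]
  · push_neg at hij
    have : ¬(j = k ∨ i = k) := by tauto
    simp [hij, this, hB i j, not_or.mpr hij]

lemma mutateList_nil (B : U → U → ℤ) : mutateList B [] = B := rfl

lemma mutateList_cons (B : U → U → ℤ) (k : U) (l : List U) :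
    mutateList B (k :: l) = mutateList (mutate B k) l := rfl

lemma mutateList_append (B : U → U → ℤ) (l₁ l₂ : List U) :
    mutateList B (l₁ ++ l₂) = mutateList (mutateList B l₁) l₂ :=
  List.foldl_append ..

lemma flipList_append {B : U → U → ℤ} {l₁ l₂ : List U}
    (h1 : FlipList B l₁) (h2 : FlipList (mutateList B l₁) l₂) :
    FlipList B (l₁ ++ l₂) := by
  induction l₁ generalizing B with
  | nil => exact h2
  | cons k l ih => exact ⟨h1.1, ih h1.2 h2⟩

end Aux


section Lift

variable {U : Type} [Fintype U] [DecidableEq U]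

/-- Restriction of a matrix to the complement of a vertex. -/
def resNe (ℓ : U) (B : U → U → ℤ) : {x : U // x ≠ ℓ} → {x : U // x ≠ ℓ} → ℤ :=
  fun i j => B i.1 j.1

lemma resNe_skew {ℓ : U} {B : U → U → ℤ} (hB : Skew B) : Skew (resNe ℓ B) :=
  fun i j => hB i.1 j.1

lemma resNe_flipAt (ℓ : U) (B : U → U → ℤ) (k : {x : U // x ≠ ℓ}) :
    resNe ℓ (flipAt B k.1) = flipAt (resNe ℓ B) k := by
  funext i j
  simp only [resNe, flipAt, Subtype.ext_iff]

lemma resNe_flipAt_ell (ℓ : U) (B : U → U → ℤ) :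
    resNe ℓ (flipAt B ℓ) = resNe ℓ B := by
  funext i j
  simp only [resNe, flipAt]
  rw [if_neg (by push_neg; exact ⟨i.2, j.2⟩)]

lemma isFlip_ell {ℓ p : U} {B : U → U → ℤ} (hrow : ∀ j, j ≠ p → B ℓ j = 0) :
    IsFlip B ℓ := by
  rcases le_or_gt 0 (B ℓ p) with h | h
  · left; intro j
    by_cases hj : j = p
    · subst hj; exact h
    · rw [hrow j hj]
  · right; intro j
    by_cases hj : j = p
    · subst hj; omega
    · rw [hrow j hj]

lemma flipAt_row_ne {B : U → U → ℤ} {k : U} (i j : U) (h : B i j = 0) :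
    flipAt B k i j = 0 := by
  simp only [flipAt]; split <;> omega

lemma flipAt_pm (B : U → U → ℤ) (k i j : U) :
    flipAt B k i j = B i j ∨ flipAt B k i j = - B i j := by
  simp only [flipAt]; split <;> [right; left] <;> rfl

/-- The key lifting lemma: a flip sequence on the quiver with `ℓ` removed lifts
to a flip sequence on the whole quiver, changing the row of `ℓ` at most in sign. -/
lemma lift (ℓ p : U) :
    ∀ (l' : List {x : U // x ≠ ℓ}) (B : U → U → ℤ), Skew B →
    (∀ j, j ≠ p → B ℓ j = 0) → FlipList (resNe ℓ B) l' →
    ∃ l : List U, FlipList B l ∧ Skew (mutateList B l) ∧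
      (∀ j, j ≠ p → (mutateList B l) ℓ j = 0) ∧
      ((mutateList B l) ℓ p = B ℓ p ∨ (mutateList B l) ℓ p = - B ℓ p) ∧
      resNe ℓ (mutateList B l) = mutateList (resNe ℓ B) l' := by
  intro l'
  induction l' with
  | nil => exact fun B hB hrow _ => ⟨[], trivial, hB, hrow, Or.inl rfl, rfl⟩
  | cons k l' ih =>
    intro B hB hrow hfl
    obtain ⟨hk, hfl'⟩ := hfl
    -- Step 1: possibly flip at ℓ first so that `k` becomes a global source/sink.
    obtain ⟨l₀, B₁, heq₁, hfl₀, hB₁, hrow₁, hsign₁, hres₁, hkflip⟩ :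
        ∃ (l₀ : List U) (B₁ : U → U → ℤ), mutateList B l₀ = B₁ ∧ FlipList B l₀ ∧
          Skew B₁ ∧ (∀ j, j ≠ p → B₁ ℓ j = 0) ∧
          (B₁ ℓ p = B ℓ p ∨ B₁ ℓ p = - B ℓ p) ∧
          resNe ℓ B₁ = resNe ℓ B ∧ IsFlip B₁ k.1 := by
      have hEll : IsFlip B ℓ := isFlip_ell hrow
      have hEllEq : mutate B ℓ = flipAt B ℓ := mutate_eq_flipAt hB hEll
      rcases hk with hsrc | hsnk
      · rcases le_or_gt 0 (B k.1 ℓ) with h | h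
        · refine ⟨[], B, rfl, trivial, hB, hrow, Or.inl rfl, rfl, Or.inl fun j => ?_⟩
          by_cases hj : j = ℓ
          · subst hj; exact h
          · exact hsrc ⟨j, hj⟩
        · refine ⟨[ℓ], flipAt B ℓ, hEllEq, ⟨hEll, trivial⟩, flipAt_skew hB ℓ,
            fun j hj => flipAt_row_ne _ _ (hrow j hj), flipAt_pm B ℓ ℓ p,
            resNe_flipAt_ell ℓ B, Or.inl fun j => ?_⟩
          simp only [flipAt]
          by_cases hj : j = ℓ
          · subst hj; rw [if_pos (Or.inr rfl)]; omega
          · rw [if_neg (by push_neg; exact ⟨k.2, hj⟩)]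
            exact hsrc ⟨j, hj⟩
      · rcases le_or_gt (B k.1 ℓ) 0 with h | h
        · refine ⟨[], B, rfl, trivial, hB, hrow, Or.inl rfl, rfl, Or.inr fun j => ?_⟩
          by_cases hj : j = ℓ
          · subst hj; exact h
          · exact hsnk ⟨j, hj⟩
        · refine ⟨[ℓ], flipAt B ℓ, hEllEq, ⟨hEll, trivial⟩, flipAt_skew hB ℓ,
            fun j hj => flipAt_row_ne _ _ (hrow j hj), flipAt_pm B ℓ ℓ p,
            resNe_flipAt_ell ℓ B, Or.inr fun j => ?_⟩
          simp only [flipAt]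
          by_cases hj : j = ℓ
          · subst hj; rw [if_pos (Or.inr rfl)]; omega
          · rw [if_neg (by push_neg; exact ⟨k.2, hj⟩)]
            exact hsnk ⟨j, hj⟩
    -- Step 2: mutate at `k` and recurse.
    have hmut : mutate B₁ k.1 = flipAt B₁ k.1 := mutate_eq_flipAt hB₁ hkflip
    set B₂ := mutate B₁ k.1 with hB₂def
    have hB₂ : Skew B₂ := by rw [hmut]; exact flipAt_skew hB₁ k.1
    have hrow₂ : ∀ j, j ≠ p → B₂ ℓ j = 0 := by
      intro j hj; rw [hmut]; exact flipAt_row_ne _ _ (hrow₁ j hj)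
    have hsign₂ : B₂ ℓ p = B₁ ℓ p ∨ B₂ ℓ p = - B₁ ℓ p := by
      rw [hmut]; exact flipAt_pm B₁ k.1 ℓ p
    have hres₂ : resNe ℓ B₂ = mutate (resNe ℓ B) k := by
      rw [hmut, resNe_flipAt, hres₁, mutate_eq_flipAt (resNe_skew hB) hk]
    obtain ⟨lrec, hfrec, hskewrec, hrowrec, hsignrec, hresrec⟩ :=
      ih B₂ hB₂ hrow₂ (by rw [hres₂]; exact hfl')
    refine ⟨l₀ ++ (k.1 :: lrec), ?_, ?_, ?_, ?_, ?_⟩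
    · refine flipList_append hfl₀ ?_
      rw [heq₁]
      exact ⟨hkflip, hfrec⟩
    · rwa [mutateList_append, heq₁, mutateList_cons]
    · rw [mutateList_append, heq₁, mutateList_cons]; exact hrowrec
    · rw [mutateList_append, heq₁, mutateList_cons]
      rcases hsignrec with h | h <;> rw [h] <;> omega
    · rw [mutateList_append, heq₁, mutateList_cons, hresrec, hres₂]; rfl

end Lift


section GraphAux

variable {U : Type} [Fintype U] [DecidableEq U]

lemma adj_iff' {B : U → U → ℤ} (hB : Skew B) {i j : U} :
    (graph B).Adj i j ↔ i ≠ j ∧ B i j ≠ 0 := by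
  constructor
  · rintro ⟨h1, h2 | h2⟩
    · exact ⟨h1, h2⟩
    · refine ⟨h1, ?_⟩
      have := hB i j; omega
  · rintro ⟨h1, h2⟩
    exact ⟨h1, Or.inl h2⟩

/-- A tree with at least two vertices has a leaf. -/
lemma exists_leaf {B : U → U → ℤ} (htree : (graph B).IsTree)
    (hcard : 1 < Fintype.card U) : ∃ ℓ, (graph B).degree ℓ = 1 := by
  have hconn := htree.isConnected
  have hdeg1 : ∀ v : U, 1 ≤ (graph B).degree v := by
    intro v
    obtain ⟨w, hw⟩ := Fintype.exists_ne_of_one_lt_card hcard v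
    obtain ⟨wlk⟩ := hconn.preconnected v w
    rw [Nat.succ_le_iff, SimpleGraph.degree_pos_iff_exists_adj]
    cases wlk with
    | nil => exact absurd rfl hw.symm
    | cons h q => exact ⟨_, h⟩
  by_contra hno
  push_neg at hno
  have hdeg2 : ∀ v : U, 2 ≤ (graph B).degree v := by
    intro v
    have h1 := hdeg1 v
    have h2 := hno v
    omega
  have hsum := SimpleGraph.sum_degrees_eq_twice_card_edges (graph B)
  have hle : Finset.univ.card • 2 ≤ ∑ v : U, (graph B).degree v :=
    Finset.card_nsmul_le_sum _ _ _ fun v _ => hdeg2 v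
  have hE := htree.card_edgeFinset
  rw [Finset.card_univ, smul_eq_mul] at hle
  omega

/-- A path between two vertices distinct from a leaf `ℓ` avoids `ℓ`. -/
lemma path_avoids {G : SimpleGraph U} {ℓ p : U} (hnbr : ∀ x, G.Adj ℓ x → x = p)
    {x y : U} (w : G.Walk x y) (hw : w.IsPath) (hx : x ≠ ℓ) (hy : y ≠ ℓ) :
    ℓ ∉ w.support := by
  intro hmem
  have hspec := w.take_spec hmem
  have hnd : ((w.takeUntil ℓ hmem).support ++ (w.dropUntil ℓ hmem).support.tail).Nodup := by
    rw [← SimpleGraph.Walk.support_append, hspec]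
    exact hw.support_nodup
  have hdisj := List.disjoint_of_nodup_append hnd
  -- p occurs in the second part
  have hp2 : p ∈ (w.dropUntil ℓ hmem).support.tail := by
    obtain ⟨z, hadj, q, hq⟩ := SimpleGraph.Walk.not_nil_iff.mp
      (SimpleGraph.Walk.not_nil_of_ne (fun h => hy h.symm) (p := w.dropUntil ℓ hmem))
    rw [hq, SimpleGraph.Walk.support_cons]
    have : z = p := hnbr z hadj
    subst this
    exact q.start_mem_support
  -- p occurs in the first part
  have hp1 : p ∈ (w.takeUntil ℓ hmem).support := by
    obtain ⟨z, hadj, q, hq⟩ := SimpleGraph.Walk.not_nil_iff.mp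
      (SimpleGraph.Walk.not_nil_of_ne (fun h => hx h.symm)
        (p := (w.takeUntil ℓ hmem).reverse))
    have hz : z = p := hnbr z hadj
    have hmem' : z ∈ (w.takeUntil ℓ hmem).reverse.support := by
      rw [hq, SimpleGraph.Walk.support_cons]
      exact List.mem_cons_of_mem _ q.start_mem_support
    rw [SimpleGraph.Walk.support_reverse, List.mem_reverse, hz] at hmem'
    exact hmem'
  exact hdisj hp1 hp2

lemma reach_restrict {B : U → U → ℤ} (ℓ : U) :
    ∀ {x y : U} (w : (graph B).Walk x y), ℓ ∉ w.support →
      ∀ (hx : x ≠ ℓ) (hy : y ≠ ℓ),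
      (graph (resNe ℓ B)).Reachable ⟨x, hx⟩ ⟨y, hy⟩ := by
  intro x y w
  induction w with
  | nil => exact fun _ hx hy => SimpleGraph.Reachable.refl _
  | @cons a b c h q ih =>
    intro hmem hx hy
    rw [SimpleGraph.Walk.support_cons, List.mem_cons] at hmem
    push_neg at hmem
    have hb : b ≠ ℓ := fun hbeq => hmem.2 (hbeq ▸ q.start_mem_support)
    obtain ⟨h1, h2⟩ := h
    have hadj : (graph (resNe ℓ B)).Adj ⟨a, hx⟩ ⟨b, hb⟩ :=
      ⟨fun hc => h1 (congrArg Subtype.val hc), h2⟩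
    exact hadj.reachable.trans (ih hmem.2 hb hy)

lemma resNe_isTree {B : U → U → ℤ} (htree : (graph B).IsTree) {ℓ p : U}
    (hnbr : ∀ x, (graph B).Adj ℓ x → x = p) (hp : p ≠ ℓ) :
    (graph (resNe ℓ B)).IsTree := by
  have hinj : Function.Injective (Subtype.val : {x : U // x ≠ ℓ} → U) :=
    Subtype.val_injective
  let φ : graph (resNe ℓ B) →g graph B :=
    ⟨Subtype.val, fun h => ⟨fun hc => h.1 (Subtype.ext hc), h.2⟩⟩
  constructor
  · haveI : Nonempty {x : U // x ≠ ℓ} := ⟨⟨p, hp⟩⟩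
    refine ⟨fun a b => ?_⟩
    obtain ⟨w⟩ := htree.isConnected.preconnected a.1 b.1
    have havoid := path_avoids hnbr w.bypass w.bypass_isPath a.2 b.2
    exact reach_restrict ℓ w.bypass havoid a.2 b.2
  · rw [SimpleGraph.isAcyclic_iff_path_unique]
    intro v w P Q
    have hPQ : (P.1.map φ) = (Q.1.map φ) := by
      have hu := SimpleGraph.isAcyclic_iff_path_unique.mp htree.IsAcyclic
        (p := ⟨P.1.map φ, SimpleGraph.Walk.map_isPath_of_injective hinj P.2⟩)
        (q := ⟨Q.1.map φ, SimpleGraph.Walk.map_isPath_of_injective hinj Q.2⟩)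
      exact congrArg Subtype.val hu
    exact Subtype.ext (SimpleGraph.Walk.map_injective_of_injective hinj _ _ hPQ)

end GraphAux


section Main

lemma final_eq {U : Type} [Fintype U] [DecidableEq U] {ℓ p : U} (hℓp : ℓ ≠ p)
    {D C : U → U → ℤ} (hD : Skew D) (hC : Skew C)
    (hrowD : ∀ j, j ≠ p → D ℓ j = 0) (hrowC : ∀ j, j ≠ p → C ℓ j = 0)
    (hres : resNe ℓ D = resNe ℓ C) (hlp : D ℓ p = C ℓ p) : D = C := by
  funext i j
  by_cases hi : i = ℓ
  · subst hi
    by_cases hj : j = p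
    · subst hj; exact hlp
    · rw [hrowD j hj, hrowC j hj]
  · by_cases hj : j = ℓ
    · by_cases hip : i = p
      · rw [hj, hip, hD p ℓ, hC p ℓ, hlp]
      · rw [hj, hD i ℓ, hC i ℓ, hrowD i hip, hrowC i hip]
    · exact congrFun (congrFun hres ⟨i, hi⟩) ⟨j, hj⟩

/-- Main lemma: two single-arrow skew matrices with the same underlying tree
are connected by a sequence of source/sink mutations. -/
lemma main_tree : ∀ (n : ℕ) (U : Type) [Fintype U] [DecidableEq U],
    Fintype.card U = n →
    ∀ (B C : U → U → ℤ), Skew B → Skew C → (∀ i j, B i j ≤ 1) → (∀ i j, C i j ≤ 1) →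
    graph B = graph C → (graph B).IsTree →
    ∃ l, FlipList B l ∧ mutateList B l = C := by
  intro n
  induction n using Nat.strong_induction_on with
  | _ n ih =>
  intro U _ _ hcard B C hB hC hB1 hC1 hgraph htree
  by_cases hsmall : Fintype.card U ≤ 1
  · -- trivial case: at most one vertex
    refine ⟨[], trivial, funext fun i => funext fun j => ?_⟩
    show B i j = C i j
    have hij : i = j := Fintype.card_le_one_iff.mp hsmall i j
    rw [hij, hB.diag, hC.diag]
  · push_neg at hsmall
    -- find a leaf ℓ with unique neighbour p
    obtain ⟨ℓ, hdeg⟩ := exists_leaf htree hsmall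
    obtain ⟨p, hpnbr⟩ := Finset.card_eq_one.mp hdeg
    have hadjp : (graph B).Adj ℓ p := by
      rw [← SimpleGraph.mem_neighborFinset, hpnbr]; exact Finset.mem_singleton_self p
    have hnbr : ∀ x, (graph B).Adj ℓ x → x = p := by
      intro x hx
      have := (SimpleGraph.mem_neighborFinset (graph B) ℓ x).mpr hx
      rw [hpnbr] at this
      exact Finset.mem_singleton.mp this
    have hpℓ : p ≠ ℓ := (hadjp.ne).symm
    have hℓp : ℓ ≠ p := hadjp.ne
    have hAdj : ∀ a b : U, (graph B).Adj a b ↔ (graph C).Adj a b := fun a b => by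
      rw [hgraph]
    -- rows of ℓ vanish outside p
    have hrowB : ∀ j, j ≠ p → B ℓ j = 0 := by
      intro j hj
      by_contra h0
      have hjℓ : ℓ ≠ j := by
        intro he; rw [← he, hB.diag] at h0; exact h0 rfl
      exact hj (hnbr j ((adj_iff' hB).mpr ⟨hjℓ, h0⟩))
    have hrowC : ∀ j, j ≠ p → C ℓ j = 0 := by
      intro j hj
      by_contra h0
      have hjℓ : ℓ ≠ j := by
        intro he; rw [← he, hC.diag] at h0; exact h0 rfl
      exact hj (hnbr j ((hAdj ℓ j).mpr ((adj_iff' hC).mpr ⟨hjℓ, h0⟩)))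
    have hBlp : B ℓ p = 1 ∨ B ℓ p = -1 := by
      have h0 : B ℓ p ≠ 0 := ((adj_iff' hB).mp hadjp).2
      have h1 := hB1 ℓ p
      have h2 := hB1 p ℓ
      have h3 := hB ℓ p
      omega
    have hClp : C ℓ p = 1 ∨ C ℓ p = -1 := by
      have h0 : C ℓ p ≠ 0 := ((adj_iff' hC).mp ((hAdj ℓ p).mp hadjp)).2
      have h1 := hC1 ℓ p
      have h2 := hC1 p ℓ
      have h3 := hC ℓ p
      omega
    -- graphs of the restrictions agree
    have key : ∀ a b : U, (B a b ≠ 0 ∨ B b a ≠ 0) ↔ (C a b ≠ 0 ∨ C b a ≠ 0) := by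
      intro a b
      by_cases hab : a = b
      · subst hab; simp [hB.diag, hC.diag]
      · constructor
        · intro h
          have : (graph C).Adj a b := (hAdj a b).mp ⟨hab, h⟩
          exact this.2
        · intro h
          have : (graph B).Adj a b := (hAdj a b).mpr ⟨hab, h⟩
          exact this.2
    have hgraph' : graph (resNe ℓ B) = graph (resNe ℓ C) := by
      refine SimpleGraph.ext ?_
      funext i j
      show (i ≠ j ∧ (B i.1 j.1 ≠ 0 ∨ B j.1 i.1 ≠ 0)) =
        (i ≠ j ∧ (C i.1 j.1 ≠ 0 ∨ C j.1 i.1 ≠ 0))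
      exact propext (and_congr_right fun _ => key i.1 j.1)
    -- restricted quiver is a tree
    have htree' : (graph (resNe ℓ B)).IsTree := resNe_isTree htree hnbr hpℓ
    -- cardinality decreases
    have hcard' : Fintype.card {x : U // x ≠ ℓ} = n - 1 := by
      have := Fintype.card_subtype_compl (fun x : U => x = ℓ)
      rw [Fintype.card_subtype_eq] at this
      rw [← hcard]
      exact this
    have hlt : n - 1 < n := by omega
    obtain ⟨l', hfl', heq'⟩ := ih (n - 1) hlt {x : U // x ≠ ℓ} hcard'
      (resNe ℓ B) (resNe ℓ C) (resNe_skew hB) (resNe_skew hC)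
      (fun i j => hB1 i.1 j.1) (fun i j => hC1 i.1 j.1) hgraph' htree'
    -- lift the mutation sequence
    obtain ⟨l, hfl, hskewD, hrowD, hsignD, hresD⟩ := lift ℓ p l' B hB hrowB hfl'
    rw [heq'] at hresD
    by_cases hfin : (mutateList B l) ℓ p = C ℓ p
    · exact ⟨l, hfl, final_eq hℓp hskewD hC hrowD hrowC hresD hfin⟩
    · -- one extra flip at ℓ
      have hEll : IsFlip (mutateList B l) ℓ := isFlip_ell hrowD
      have hmeq : mutate (mutateList B l) ℓ = flipAt (mutateList B l) ℓ :=
        mutate_eq_flipAt hskewD hEll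
      refine ⟨l ++ [ℓ], flipList_append hfl ⟨hEll, trivial⟩, ?_⟩
      rw [mutateList_append]
      show mutate (mutateList B l) ℓ = C
      rw [hmeq]
      refine final_eq hℓp (flipAt_skew hskewD ℓ) hC
        (fun j hj => flipAt_row_ne _ _ (hrowD j hj)) hrowC ?_ ?_
      · rw [resNe_flipAt_ell]; exact hresD
      · have hval : flipAt (mutateList B l) ℓ ℓ p = - (mutateList B l) ℓ p := by
          simp [flipAt]
        rw [hval]
        rcases hsignD with h | h <;> rcases hBlp with h2 | h2 <;>
          rcases hClp with h3 | h3 <;> omega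

end Main

/-- Two orientations of the same tree are mutation equivalent. -/
theorem tree_orientations_mutation_equivalent {V : Type} [Fintype V] [DecidableEq V]
    (B C : V → V → ℤ) (hB : Skew B) (hC : Skew C)
    (hB1 : ∀ i j, B i j ≤ 1) (hC1 : ∀ i j, C i j ≤ 1)
    (hgraph : graph B = graph C) (htree : (graph B).IsTree) :
    MutEquiv B C := by
  obtain ⟨l, _, heq⟩ := main_tree (Fintype.card V) V rfl B C hB hC hB1 hC1 hgraph htree
  refine ⟨l, Equiv.refl V, ?_⟩
  funext i j
  show (mutateList B l) i j = C i j
  rw [heq]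

end QuiverMutation
end

section
/- Every connected full subquiver of a quiver lying in the mutation class of a type A Dynkin quiver again lies in the mutation class of some type A Dynkin quiver. Equivalently: if Γ satisfies the defining conditions of the class M^A (all non-trivial cycles are oriented 3-cycles, every vertex has valency at most 4, valency-4 vertices have their four arrows split between two 3-cycles, and valency-3 vertices have exactly two of their arrows in a 3-cycle and the third in no 3-cycle), then every connected full subquiver of Γ also satisfies these conditions. -/
namespace QuiverMutation

variable {V W : Type} [Fintype V] [DecidableEq V] [Fintype W] [DecidableEq W]

section Aux

variable {B : V → V → ℤ}

lemma graph_adj (B : V → V → ℤ) (i j : V) :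
    (graph B).Adj i j ↔ i ≠ j ∧ (B i j ≠ 0 ∨ B j i ≠ 0) := Iff.rfl

lemma skew_diag (hB : Skew B) (i : V) : B i i = 0 := by have := hB i i; omega

lemma tri_facts (hB : Skew B) {u v x : V} (h : Tri B u v x) :
    u ≠ v ∧ u ≠ x ∧ v ≠ x ∧ (graph B).Adj u v ∧ (graph B).Adj u x ∧ (graph B).Adj v x := by
  have h0 : ∀ a : V, B a a = 0 := skew_diag hB
  rcases h with ⟨h1, h2, h3⟩ | ⟨h1, h2, h3⟩
  · refine ⟨?_, ?_, ?_, ?_, ?_, ?_⟩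
    · rintro rfl; rw [h0] at h1; omega
    · rintro rfl; rw [h0] at h3; omega
    · rintro rfl; rw [h0] at h2; omega
    · exact ⟨by rintro rfl; rw [h0] at h1; omega, Or.inl h1.ne'⟩
    · exact ⟨by rintro rfl; rw [h0] at h3; omega, Or.inr h3.ne'⟩
    · exact ⟨by rintro rfl; rw [h0] at h2; omega, Or.inl h2.ne'⟩
  · refine ⟨?_, ?_, ?_, ?_, ?_, ?_⟩
    · rintro rfl; rw [h0] at h3; omega
    · rintro rfl; rw [h0] at h1; omega
    · rintro rfl; rw [h0] at h2; omega
    · exact ⟨by rintro rfl; rw [h0] at h3; omega, Or.inr h3.ne'⟩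
    · exact ⟨by rintro rfl; rw [h0] at h1; omega, Or.inl h1.ne'⟩
    · exact ⟨by rintro rfl; rw [h0] at h2; omega, Or.inr h2.ne'⟩

/-- Two distinct triangles cannot share an edge: otherwise there would be a
non-oriented 4-cycle, contradicting the `M^A` cycle condition. -/
lemma no_shared_edge (hB : Skew B) (hMA : MAQuiver B) {u v x y : V}
    (h1 : Tri B u v x) (h2 : Tri B u v y) (hxy : x ≠ y) : False := by
  obtain ⟨huv, hux, hvx, auv, aux_, avx⟩ := tri_facts hB h1
  obtain ⟨-, huy, hvy, -, auy, avy⟩ := tri_facts hB h2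
  -- the 4-cycle x – u – y – v – x
  let W : (graph B).Walk x x :=
    .cons aux_.symm (.cons auy (.cons avy.symm (.cons avx .nil)))
  have hcirc : W.IsCircuit := by
    constructor
    · rw [SimpleGraph.Walk.isTrail_def]
      simp only [W, SimpleGraph.Walk.edges_cons, SimpleGraph.Walk.edges_nil,
        List.nodup_cons, List.mem_cons, List.not_mem_nil, or_false, List.nodup_nil,
        and_true, Sym2.eq_iff, not_or]
      refine ⟨⟨?_, ?_, ?_⟩, ⟨?_, ?_⟩, ?_⟩ <;> tauto
    · simp [W]
  have hlen := (hMA.2.2.1 x W hcirc).1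
  simp [W, SimpleGraph.Walk.length_cons] at hlen

variable (B) in
/-- The inclusion of the full subquiver on `s` as a graph homomorphism. -/
def incl (s : Finset V) : graph (res B s) →g graph B :=
  ⟨Subtype.val, fun h => ⟨fun e => h.1 (Subtype.ext e), h.2⟩⟩

lemma incl_injective (s : Finset V) : Function.Injective ⇑(incl B s) :=
  Subtype.val_injective

lemma orientedW_res {s : Finset V} {u v : {x // x ∈ s}} (w : (graph (res B s)).Walk u v)
    (h : OrientedW B (w.map (incl B s))) : OrientedW (res B s) w := by
  intro d hd
  have hmem : (incl B s).mapDart d ∈ (w.map (incl B s)).darts := by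
    rw [SimpleGraph.Walk.darts_map]; exact List.mem_map_of_mem hd
  exact h _ hmem

lemma mem_nbrs (B : V → V → ℤ) (v u : V) : u ∈ nbrs B v ↔ (graph B).Adj v u := by
  simp [nbrs]

lemma mem_nbrs_res {s : Finset V} (v u : {x // x ∈ s}) :
    u ∈ nbrs (res B s) v ↔ (graph B).Adj v.1 u.1 := by
  rw [mem_nbrs]
  constructor
  · rintro ⟨h1, h2⟩; exact ⟨fun e => h1 (Subtype.ext e), h2⟩
  · rintro ⟨h1, h2⟩; exact ⟨fun e => h1 (congrArg Subtype.val e), h2⟩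

lemma nbrs_res_image {s : Finset V} (v : {x // x ∈ s}) :
    (nbrs (res B s) v).image Subtype.val = nbrs B v.1 ∩ s := by
  ext u
  constructor
  · intro h
    rcases Finset.mem_image.1 h with ⟨w, hw, rfl⟩
    exact Finset.mem_inter.2 ⟨(mem_nbrs _ _ _).2 ((mem_nbrs_res _ _).1 hw), w.2⟩
  · intro h
    rcases Finset.mem_inter.1 h with ⟨h1, h2⟩
    exact Finset.mem_image.2 ⟨⟨u, h2⟩, (mem_nbrs_res _ _).2 ((mem_nbrs _ _ _).1 h1), rfl⟩

lemma valency_res (s : Finset V) (v : {x // x ∈ s}) :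
    valency (res B s) v = (nbrs B v.1 ∩ s).card := by
  rw [valency, ← Finset.card_image_of_injective (nbrs (res B s) v) Subtype.val_injective,
    nbrs_res_image]

lemma card_three (a b c : V) : ({a, b, c} : Finset V).card ≤ 3 := by
  refine le_trans (Finset.card_insert_le _ _) (Nat.succ_le_succ ?_)
  refine le_trans (Finset.card_insert_le _ _) (Nat.succ_le_succ ?_)
  simp

/-- The generic valency-3 case coming from a valency-4 vertex of the ambient
quiver with one neighbour missing from `s`. -/
lemma val3_helper (hB : Skew B) (hMA : MAQuiver B) {s : Finset V} (v : {x // x ∈ s})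
    (w x y z : V) (hn : nbrs B v.1 = {w, x, y, z})
    (hwx : Tri B v.1 w x) (hyz : Tri B v.1 y z)
    (hxs : x ∉ s) (hws : w ∈ s) (hys : y ∈ s) (hzs : z ∈ s) :
    ∃ a b c, nbrs (res B s) v = {a, b, c} ∧ Tri (res B s) v a b ∧
      ¬ EdgeIn3 (res B s) v c := by
  refine ⟨⟨y, hys⟩, ⟨z, hzs⟩, ⟨w, hws⟩, ?_, ?_, ?_⟩
  · ext u
    rw [mem_nbrs_res, ← mem_nbrs, hn]
    simp only [Finset.mem_insert, Finset.mem_singleton, Subtype.ext_iff]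
    constructor
    · rintro (h | h | h | h)
      · exact Or.inr (Or.inr h)
      · exact absurd (h ▸ u.2) hxs
      · exact Or.inl h
      · exact Or.inr (Or.inl h)
    · tauto
  · exact hyz
  · rintro ⟨t, ht⟩
    have ht' : Tri B v.1 w t.1 := ht
    have hxt : x ≠ t.1 := fun e => hxs (e ▸ t.2)
    exact no_shared_edge hB hMA hwx ht' hxt

end Aux

/-- Connected full subquivers of a quiver satisfying the `M^A`
conditions again satisfy the `M^A` conditions. -/
theorem MA_closed_under_connected_full_subquivers {V : Type} [Fintype V] [DecidableEq V]
    (B : V → V → ℤ) (hB : Skew B) (hMA : MAQuiver B)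
    (s : Finset V) (hconn : (graph (res B s)).Connected) :
    MAQuiver (res B s) := by
  refine ⟨hconn, fun i j => hMA.2.1 i.1 j.1, ?_, ?_, ?_, ?_⟩
  · -- circuits: map to the ambient graph
    intro u w hw
    have hc : (w.map (incl B s)).IsCircuit :=
      ⟨(SimpleGraph.Walk.map_isTrail_iff_of_injective (incl_injective s)).2 hw.isTrail,
       fun h => hw.ne_nil ((SimpleGraph.Walk.map_eq_nil_iff (incl B s)).mp h)⟩
    obtain ⟨hlen, hor⟩ := hMA.2.2.1 u.1 (w.map (incl B s)) hc
    refine ⟨by rw [← SimpleGraph.Walk.length_map (incl B s) w]; exact hlen, ?_⟩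
    rcases hor with h | h
    · exact Or.inl (orientedW_res w h)
    · right
      replace h : OrientedW B (w.reverse.map (incl B s)) := by
        rw [← SimpleGraph.Walk.reverse_map]; exact h
      exact orientedW_res w.reverse h
  · -- valency bound
    intro v
    rw [valency_res]
    exact le_trans (Finset.card_le_card Finset.inter_subset_left) (hMA.2.2.2.1 v.1)
  · -- valency 4
    intro v hv
    rw [valency_res] at hv
    have hle := hMA.2.2.2.1 v.1
    have hlec := Finset.card_le_card
      (Finset.inter_subset_left : nbrs B v.1 ∩ s ⊆ nbrs B v.1)
    rw [valency] at hle
    have heq : nbrs B v.1 ∩ s = nbrs B v.1 :=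
      Finset.eq_of_subset_of_card_le Finset.inter_subset_left (by omega)
    have hsub : ∀ u ∈ nbrs B v.1, u ∈ s := fun u hu => by
      rw [← heq] at hu; exact (Finset.mem_inter.1 hu).2
    have hv4' : valency B v.1 = 4 := by rw [valency]; omega
    obtain ⟨w, x, y, z, hn, hwx, hyz⟩ := hMA.2.2.2.2.1 v.1 hv4'
    have hws : w ∈ s := hsub w (by rw [hn]; simp)
    have hxs : x ∈ s := hsub x (by rw [hn]; simp)
    have hys : y ∈ s := hsub y (by rw [hn]; simp)
    have hzs : z ∈ s := hsub z (by rw [hn]; simp)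
    refine ⟨⟨w, hws⟩, ⟨x, hxs⟩, ⟨y, hys⟩, ⟨z, hzs⟩, ?_, hwx, hyz⟩
    ext u
    rw [mem_nbrs_res, ← mem_nbrs, hn]
    simp [Subtype.ext_iff]
  · -- valency 3
    intro v hv
    rw [valency_res] at hv
    have hle := hMA.2.2.2.1 v.1
    rw [valency] at hle
    have hlec := Finset.card_le_card
      (Finset.inter_subset_left : nbrs B v.1 ∩ s ⊆ nbrs B v.1)
    have hor : valency B v.1 = 3 ∨ valency B v.1 = 4 := by rw [valency]; omega
    rcases hor with h3 | h4
    · -- ambient valency 3: all neighbours in s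
      have heq : nbrs B v.1 ∩ s = nbrs B v.1 :=
        Finset.eq_of_subset_of_card_le Finset.inter_subset_left
          (by rw [valency] at h3; omega)
      have hsub : ∀ u ∈ nbrs B v.1, u ∈ s := fun u hu => by
        rw [← heq] at hu; exact (Finset.mem_inter.1 hu).2
      obtain ⟨w, x, y, hn, hwx, hy⟩ := hMA.2.2.2.2.2 v.1 h3
      have hws : w ∈ s := hsub w (by rw [hn]; simp)
      have hxs : x ∈ s := hsub x (by rw [hn]; simp)
      have hys : y ∈ s := hsub y (by rw [hn]; simp)
      refine ⟨⟨w, hws⟩, ⟨x, hxs⟩, ⟨y, hys⟩, ?_, hwx, ?_⟩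
      · ext u
        rw [mem_nbrs_res, ← mem_nbrs, hn]
        simp [Subtype.ext_iff]
      · rintro ⟨t, ht⟩
        exact hy ⟨t.1, ht⟩
    · -- ambient valency 4: exactly one neighbour missing from s
      obtain ⟨w, x, y, z, hn, hwx, hyz⟩ := hMA.2.2.2.2.1 v.1 h4
      have hcard4 : ({w, x, y, z} : Finset V).card = 4 := by rw [← hn]; exact h4
      have key : ∀ a b c : V, ({w, x, y, z} : Finset V) ⊆ {a, b, c} → False := by
        intro a b c hsub'
        have h1 := Finset.card_le_card hsub'
        have h2 := card_three a b c
        omega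
      have hwx' : w ≠ x := by
        rintro rfl; exact key w y z (by intro u hu; simp at hu ⊢; tauto)
      have hwy : w ≠ y := by
        rintro rfl; exact key w x z (by intro u hu; simp at hu ⊢; tauto)
      have hwz : w ≠ z := by
        rintro rfl; exact key w x y (by intro u hu; simp at hu ⊢; tauto)
      have hxy : x ≠ y := by
        rintro rfl; exact key w x z (by intro u hu; simp at hu ⊢; tauto)
      have hxz : x ≠ z := by
        rintro rfl; exact key w x y (by intro u hu; simp at hu ⊢; tauto)
      have hyz' : y ≠ z := by
        rintro rfl; exact key w x y (by intro u hu; simp at hu ⊢; tauto)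
      have hdiff : ((nbrs B v.1) \ s).card = 1 := by
        have he : (nbrs B v.1) \ s = (nbrs B v.1) \ (nbrs B v.1 ∩ s) := by
          ext u; simp only [Finset.mem_sdiff, Finset.mem_inter]; tauto
        rw [he, Finset.card_sdiff_of_subset Finset.inter_subset_left]
        rw [valency] at h4; omega
      obtain ⟨m, hm⟩ := Finset.card_eq_one.1 hdiff
      have hmm : m ∈ nbrs B v.1 ∧ m ∉ s := by
        have : m ∈ (nbrs B v.1) \ s := hm ▸ Finset.mem_singleton_self m
        simpa [Finset.mem_sdiff] using this
      have hothers : ∀ u ∈ nbrs B v.1, u ≠ m → u ∈ s := by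
        intro u hu hum
        by_contra hus
        have : u ∈ (nbrs B v.1) \ s := Finset.mem_sdiff.2 ⟨hu, hus⟩
        rw [hm, Finset.mem_singleton] at this
        exact hum this
      have hwmem : w ∈ nbrs B v.1 := by rw [hn]; simp
      have hxmem : x ∈ nbrs B v.1 := by rw [hn]; simp
      have hymem : y ∈ nbrs B v.1 := by rw [hn]; simp
      have hzmem : z ∈ nbrs B v.1 := by rw [hn]; simp
      have hmmem : m ∈ ({w, x, y, z} : Finset V) := hn ▸ hmm.1
      simp only [Finset.mem_insert, Finset.mem_singleton] at hmmem
      rcases hmmem with hmeq | hmeq | hmeq | hmeq <;> rw [hmeq] at hmm hothers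
      · -- missing w
        exact val3_helper hB hMA v x w y z
          (by rw [hn]; ext u; simp only [Finset.mem_insert, Finset.mem_singleton]; tauto)
          hwx.symm hyz hmm.2
          (hothers x hxmem hwx'.symm) (hothers y hymem hwy.symm) (hothers z hzmem hwz.symm)
      · -- missing x
        exact val3_helper hB hMA v w x y z hn hwx hyz hmm.2
          (hothers w hwmem hwx') (hothers y hymem hxy.symm) (hothers z hzmem hxz.symm)
      · -- missing y
        exact val3_helper hB hMA v z y w x
          (by rw [hn]; ext u; simp only [Finset.mem_insert, Finset.mem_singleton]; tauto)
          hyz.symm hwx hmm.2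
          (hothers z hzmem hyz'.symm) (hothers w hwmem hwy) (hothers x hxmem hxy)
      · -- missing z
        exact val3_helper hB hMA v y z w x
          (by rw [hn]; ext u; simp only [Finset.mem_insert, Finset.mem_singleton]; tauto)
          hyz hwx hmm.2
          (hothers y hymem hyz') (hothers w hwmem hwz) (hothers x hxmem hxz)

end QuiverMutation
end

section
/- If Q is a Type II quiver (with distinguished vertices a, b, c, d) and v is a or b, then μ_v(Q) is a Type III quiver. -/
namespace QuiverMutation

variable {V W : Type} [Fintype V] [DecidableEq V] [Fintype W] [DecidableEq W]

/-- Swapping the roles of `a` and `b` in Type II data. -/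
def TypeIIData.swap {V : Type} [Fintype V] [DecidableEq V] {B : V → V → ℤ}
    (D : TypeIIData B) : TypeIIData B where
  a := D.b
  b := D.a
  c := D.c
  d := D.d
  hcard := by have h := D.hcard; rwa [Finset.insert_comm] at h
  hca := D.hcb
  had := D.hbd
  hcb := D.hca
  hbd := D.had
  hdc := D.hdc
  hab := D.hba
  hba := D.hab
  va := D.vb
  vb := D.va
  s := D.s
  t := D.t
  hst := D.hst
  hpart := by rw [Finset.pair_comm]; exact D.hpart
  hcs := D.hcs
  hdt := D.hdt
  hsep := D.hsep
  hQ' := D.hQ'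
  hQ'' := D.hQ''
  hcconn := D.hcconn
  hdconn := D.hdconn

theorem typeII_mut_b {V : Type} [Fintype V] [DecidableEq V]
    (B : V → V → ℤ) (hB : Skew B) (D : TypeIIData B) :
    IsTypeIII (mutate B D.b) := by
  obtain ⟨a, b, c, d, hcard, hca, had, hcb, hbd, hdc, hab, hba, va, vb, s, t, hst,
    hpart, hcs, hdt, hsep, hQ', hQ'', hcconn, hdconn⟩ := D
  -- diagonal is zero
  have hzero : ∀ v, B v v = 0 := fun v => by have := hB v v; omega
  -- skew entries
  have Bac : B a c = -1 := by have := hB a c; omega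
  have Bda : B d a = -1 := by have := hB a d; omega
  have Bbc : B b c = -1 := by have := hB b c; omega
  have Bdb : B d b = -1 := by have := hB b d; omega
  have Bcd : B c d = -1 := by have := hB c d; omega
  -- distinctness
  have hne_ab : a ≠ b := by
    intro h
    rw [h, Finset.insert_idem] at hcard
    have h1 := Finset.card_insert_le b ({c, d} : Finset V)
    have h2 := Finset.card_insert_le c ({d} : Finset V)
    simp only [Finset.card_singleton] at h2
    omega
  have hne_cb : c ≠ b := by
    intro h; rw [h] at hcb; rw [hzero] at hcb; omega
  have hne_bd : b ≠ d := by
    intro h; rw [h] at hbd; rw [hzero] at hbd; omega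
  have hne_db : d ≠ b := hne_bd.symm
  have hne_cd : c ≠ d := by
    intro h; rw [h] at hdc; rw [hzero] at hdc; omega
  -- neighbours of b
  have hmemnbrs : ∀ x, x ∈ nbrs B b ↔ (b ≠ x ∧ (B b x ≠ 0 ∨ B x b ≠ 0)) := fun x => by
    simp only [nbrs, Finset.mem_filter, Finset.mem_univ, true_and]
    exact Iff.rfl
  have hsub : ({c, d} : Finset V) ⊆ nbrs B b := by
    intro x hx
    rw [Finset.mem_insert, Finset.mem_singleton] at hx
    rcases hx with h | h <;> subst h <;> rw [hmemnbrs]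
    · exact ⟨hne_cb.symm, Or.inr (by rw [hcb]; norm_num)⟩
    · exact ⟨hne_bd, Or.inl (by rw [hbd]; norm_num)⟩
  have hnbrs : nbrs B b = {c, d} := by
    refine (Finset.eq_of_subset_of_card_le hsub ?_).symm
    rw [Finset.card_pair hne_cd]
    exact le_of_eq vb
  have hb0 : ∀ v, v ≠ c → v ≠ d → B b v = 0 ∧ B v b = 0 := by
    intro v h1 h2
    by_cases hvb : v = b
    · subst hvb; exact ⟨hzero v, hzero v⟩
    · have hv : v ∉ nbrs B b := by
        rw [hnbrs, Finset.mem_insert, Finset.mem_singleton]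
        rintro (h | h) <;> [exact h1 h; exact h2 h]
      rw [hmemnbrs] at hv
      push_neg at hv
      exact hv (fun h => hvb h.symm)
  -- unfold mutation away from b
  have munf : ∀ i j, i ≠ b → j ≠ b →
      mutate B b i j = B i j + max (B i b) 0 * max (B b j) 0
        - max (-B i b) 0 * max (-B b j) 0 := by
    intro i j h1 h2
    simp [mutate, h1, h2]
  -- dropEdge away from the pair (d,c)
  have hdrop : ∀ i j, ¬((i = d ∧ j = c) ∨ (i = c ∧ j = d)) →
      dropEdge B d c i j = B i j := by
    intro i j h
    simp only [dropEdge]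
    exact if_neg h
  -- members of s ∪ t avoid a and b
  have hmem : ∀ x, x ∈ s ∪ t → x ≠ a ∧ x ≠ b := by
    intro x hx
    rw [hpart, Finset.mem_compl, Finset.mem_insert, Finset.mem_singleton] at hx
    push_neg at hx
    exact hx
  have hds : d ∉ s := Finset.disjoint_right.mp hst hdt
  have hct : c ∉ t := Finset.disjoint_left.mp hst hcs
  -- separation for the mutated quiver
  have hsep' : ∀ i ∈ s, ∀ j ∈ t, mutate B b i j = 0 ∧ mutate B b j i = 0 := by
    intro i hi j hj
    obtain ⟨hia, hib⟩ := hmem i (Finset.mem_union_left _ hi)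
    obtain ⟨hja, hjb⟩ := hmem j (Finset.mem_union_right _ hj)
    have hid : i ≠ d := fun h => hds (h ▸ hi)
    have hjc : j ≠ c := fun h => hct (h ▸ hj)
    have hBij := (hsep i hi j hj).1
    have hBji := (hsep i hi j hj).2
    rw [munf i j hib hjb, munf j i hjb hib]
    by_cases hic : i = c
    · subst hic
      by_cases hjd : j = d
      · subst hjd
        rw [Bcd, hcb, hbd, hdc, Bdb, Bbc]
        norm_num
      · obtain ⟨h1, h2⟩ := hb0 j hjc hjd
        have e1 : B i j = 0 := by
          rw [← hdrop i j (by rintro (⟨h, -⟩ | ⟨-, h⟩) <;> [exact hne_cd h; exact hjd h])]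
          exact hBij
        have e2 : B j i = 0 := by
          rw [← hdrop j i (by rintro (⟨h, -⟩ | ⟨h, -⟩) <;> [exact hjd h; exact hjc h])]
          exact hBji
        rw [e1, e2, h1, h2]
        simp
    · obtain ⟨h1, h2⟩ := hb0 i hic hid
      have e1 : B i j = 0 := by
        rw [← hdrop i j (by rintro (⟨h, -⟩ | ⟨h, -⟩) <;> [exact hid h; exact hic h])]
        exact hBij
      have e2 : B j i = 0 := by
        rw [← hdrop j i (by rintro (⟨-, h⟩ | ⟨-, h⟩) <;> [exact hic h; exact hid h])]
        exact hBji
      rw [e1, e2, h1, h2]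
      simp
  -- restriction to s is unchanged
  have hres_s : res (mutate B b) s = res (dropEdge B d c) s := by
    funext i j
    obtain ⟨i, hi⟩ := i
    obtain ⟨j, hj⟩ := j
    show mutate B b i j = dropEdge B d c i j
    have hib := (hmem i (Finset.mem_union_left _ hi)).2
    have hjb := (hmem j (Finset.mem_union_left _ hj)).2
    have hid : i ≠ d := fun h => hds (h ▸ hi)
    have hjd : j ≠ d := fun h => hds (h ▸ hj)
    rw [munf i j hib hjb]
    have e1 : max (B b j) 0 = 0 := by
      by_cases h : j = c
      · subst h; rw [Bbc]; norm_num
      · rw [(hb0 j h hjd).1]; exact max_self 0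
    have e2 : max (-B i b) 0 = 0 := by
      by_cases h : i = c
      · subst h; rw [hcb]; norm_num
      · rw [(hb0 i h hid).2]; simp
    rw [e1, e2, hdrop i j (by rintro (⟨h, -⟩ | ⟨-, h⟩) <;> [exact hid h; exact hjd h])]
    ring
  -- restriction to t is unchanged
  have hres_t : res (mutate B b) t = res (dropEdge B d c) t := by
    funext i j
    obtain ⟨i, hi⟩ := i
    obtain ⟨j, hj⟩ := j
    show mutate B b i j = dropEdge B d c i j
    have hib := (hmem i (Finset.mem_union_right _ hi)).2
    have hjb := (hmem j (Finset.mem_union_right _ hj)).2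
    have hic : i ≠ c := fun h => hct (h ▸ hi)
    have hjc : j ≠ c := fun h => hct (h ▸ hj)
    rw [munf i j hib hjb]
    have e1 : max (B i b) 0 = 0 := by
      by_cases h : i = d
      · subst h; rw [Bdb]; norm_num
      · rw [(hb0 i hic h).2]; exact max_self 0
    have e2 : max (-B b j) 0 = 0 := by
      by_cases h : j = d
      · subst h; rw [hbd]; norm_num
      · rw [(hb0 j hjc h).1]; simp
    rw [e1, e2, hdrop i j (by rintro (⟨-, h⟩ | ⟨h, -⟩) <;> [exact hjc h; exact hic h])]
    ring
  have m_ca : mutate B b c a = 1 := by rw [munf c a hne_cb hne_ab, hca, hba]; simp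
  have m_ad : mutate B b a d = 1 := by rw [munf a d hne_ab hne_db, had, hab]; simp
  have m_db : mutate B b d b = 1 := by simp [mutate, Bdb]
  have m_bc : mutate B b b c = 1 := by simp [mutate, Bbc]
  have m_ab : mutate B b a b = 0 := by simp [mutate, hab]
  have m_ba : mutate B b b a = 0 := by simp [mutate, hba]
  have m_cd : mutate B b c d = 0 := by
    rw [munf c d hne_cb hne_db, Bcd, hcb, hbd]; norm_num
  have m_dc : mutate B b d c = 0 := by
    rw [munf d c hne_db hne_cb, hdc, Bdb, Bbc]; norm_num
  have mQ' : MAQuiver (res (mutate B b) s) := by rw [hres_s]; exact hQ'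
  have mQ'' : MAQuiver (res (mutate B b) t) := by rw [hres_t]; exact hQ''
  have mcc : Connecting (res (mutate B b) s) ⟨c, hcs⟩ := by rw [hres_s]; exact hcconn
  have mdc : Connecting (res (mutate B b) t) ⟨d, hdt⟩ := by rw [hres_t]; exact hdconn
  exact ⟨⟨a, b, c, d, hcard, m_ca, m_ad, m_db, m_bc, m_ab, m_ba, m_cd, m_dc,
    s, t, hst, hpart, hcs, hdt, hsep', mQ', mQ'', mcc, mdc⟩⟩

/-- Mutating a Type II quiver at `a` or at `b` gives a Type III
quiver. -/
theorem typeII_mutation_at_a_or_b {V : Type} [Fintype V] [DecidableEq V]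
    (B : V → V → ℤ) (hB : Skew B) (D : TypeIIData B) :
    IsTypeIII (mutate B D.a) ∧ IsTypeIII (mutate B D.b) :=
  ⟨typeII_mut_b B hB D.swap, typeII_mut_b B hB D⟩

end QuiverMutation
end
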